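/- Suppose for every z ∈ Z the loss F(·, z) takes values in [0,1], is L-Lipschitz and β-smooth (no convexity assumed), and run SGD with constant step size 0 < α ≤ c/T for T steps on the neighbouring datasets S and S'. Then for every t_0 with 1 ≤ t_0 ≤ T and every example z, the expectation over uniform index sequences and Bernoulli masks satisfies E_I E_m |F(w̄_T(I,m), z) − F(w̄_T'(I,m), z)| ≤ t_0/n + (2 s L² (1 + k e^{cβ}) / ((n−1)β)) · (T/t_0)^{cβ/k}. -/

import Mathlib

private lemma mask_sum_prod {k : ℕ} (f : Fin k → Bool → ℝ) :
    ∑ m : Fin k → Bool, ∏ i, f i (m i) = ∏ i, (f i true + f i false) := by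
  classical
  rw [← Fintype.prod_sum]
  exact Finset.prod_congr rfl fun i _ => by simp

private lemma count_fixed {N n : ℕ} (p : Fin N) (j : Fin n) :
    ∑ I : Fin N → Fin n, (if I p = j then (1:ℝ) else 0) = (n:ℝ) ^ (N - 1) := by
  classical
  have h1 : ∑ I : Fin N → Fin n, (if I p = j then (1:ℝ) else 0)
      = ∑ y : Fin n × ({i : Fin N // i ≠ p} → Fin n), (if y.1 = j then (1:ℝ) else 0) :=
    Fintype.sum_equiv (Equiv.piSplitAt p fun _ => Fin n) _ _
      (fun I => by simp [Equiv.piSplitAt_apply])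
  rw [h1, Fintype.sum_prod_type_right]
  simp only [Fintype.sum_ite_eq']
  rw [Finset.sum_const, nsmul_eq_mul, mul_one, Finset.card_univ, Fintype.card_fun]
  simp [Fintype.card_subtype_compl, Fintype.card_subtype_eq]

set_option maxHeartbeats 1000000 in
/-- **Theorem 4.4, uniform-over-t₀ form (Eq. (with-con)).** For a loss with values in `[0,1]`
that is `L`-Lipschitz and `β`-smooth (no convexity), running SGD with constant step size
`0 < α ≤ c/T` for `T` steps on neighbouring datasets, for every `1 ≤ t₀ ≤ T` and every `z`,
`E_I E_m |F(w̄_T, z) - F(w̄_T', z)| ≤ t₀/n + (2 s L² (1 + k e^{cβ}) / ((n-1)β)) (T/t₀)^{cβ/k}`. -/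
theorem sewa_nonconvex_stability_t0
    {E : Type*} [NormedAddCommGroup E] [InnerProductSpace ℝ E]
    {Z : Type*} (F : E → Z → ℝ) (gradF : E → Z → E)
    (L β c : ℝ) (hL : 0 < L) (hβ : 0 < β) (hc : 0 < c)
    (hdiff : ∀ (z : Z) (x : E), HasFDerivAt (fun u => F u z) ((innerSL ℝ) (gradF x z)) x)
    (hrange : ∀ (u : E) (z : Z), F u z ∈ Set.Icc (0 : ℝ) 1)
    (hLip : ∀ (z : Z) (u v : E), |F u z - F v z| ≤ L * ‖u - v‖)
    (hsmooth : ∀ (z : Z) (u v : E), ‖gradF u z - gradF v z‖ ≤ β * ‖u - v‖)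
    (n : ℕ) (hn : 2 ≤ n) (S S' : Fin n → Z) (j : Fin n)
    (hSS' : ∀ i, i ≠ j → S i = S' i)
    (T k : ℕ) (hk : 1 ≤ k) (hkT : k ≤ T)
    (α : ℝ) (hα : 0 < α) (hα2 : α ≤ c / T)
    (w0 : E) (w w' : (Fin (T + 1) → Fin n) → ℕ → E)
    (hw1 : ∀ I, w I 1 = w0) (hw1' : ∀ I, w' I 1 = w0)
    (hwrec : ∀ I, ∀ t, ∀ (h2 : 2 ≤ t) (hT' : t ≤ T),
      w I t = w I (t - 1) - α • gradF (w I (t - 1)) (S (I ⟨t, by omega⟩)))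
    (hwrec' : ∀ I, ∀ t, ∀ (h2 : 2 ≤ t) (hT' : t ≤ T),
      w' I t = w' I (t - 1) - α • gradF (w' I (t - 1)) (S' (I ⟨t, by omega⟩)))
    (s : Fin k → ℝ) (hs : ∀ i, s i ∈ Set.Icc (0 : ℝ) 1)
    (t₀ : ℕ) (ht₀ : 1 ≤ t₀) (ht₀T : t₀ ≤ T)
    (z : Z) :
    ((1 : ℝ) / (n : ℝ) ^ (T + 1)) *
      ∑ I : Fin (T + 1) → Fin n,
        ∑ m : Fin k → Bool,
          (∏ i, if m i then s i else 1 - s i) *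
            |F (((1 : ℝ) / k) • ∑ i : Fin k, (if m i then (1 : ℝ) else 0) • w I (T - k + 1 + i)) z -
              F (((1 : ℝ) / k) • ∑ i : Fin k, (if m i then (1 : ℝ) else 0) • w' I (T - k + 1 + i)) z|
      ≤ (t₀ : ℝ) / n +
          (2 * (⨆ i, s i) * L ^ 2 * (1 + (k : ℝ) * Real.exp (c * β)) / (((n : ℝ) - 1) * β)) *
            ((T : ℝ) / (t₀ : ℝ)) ^ (c * β / k) := by
  classical
  have hT1 : 1 ≤ T := hk.trans hkT
  have hn0 : (0:ℝ) < n := by exact_mod_cast (by omega : 0 < n)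
  have hT0 : (0:ℝ) < T := by exact_mod_cast (by omega : 0 < T)
  have hk0 : (0:ℝ) < k := by exact_mod_cast hk
  -- gradient norm bound
  have hgrad : ∀ (x : E) (z' : Z), ‖gradF x z'‖ ≤ L := by
    intro x z'
    have h := (hdiff z' x).le_of_lip' hL.le ?_
    · rwa [innerSL_apply_norm] at h
    · filter_upwards with y
      calc ‖F y z' - F x z'‖ = |F y z' - F x z'| := Real.norm_eq_abs _
        _ ≤ L * ‖y - x‖ := hLip z' y x
  -- per-step deterministic inequality
  have hstep : ∀ I t (h2 : 2 ≤ t) (hT' : t ≤ T),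
      ‖w I t - w' I t‖ ≤ (1 + α*β) * ‖w I (t-1) - w' I (t-1)‖ +
        (if I ⟨t, by omega⟩ = j then 2*α*L else 0) := by
    intro I t h2 hT'
    rw [hwrec I t h2 hT', hwrec' I t h2 hT']
    set u := w I (t-1)
    set v := w' I (t-1)
    set i₀ : Fin (T+1) := ⟨t, by omega⟩
    have hβδ : 0 ≤ α * β * ‖u - v‖ := by positivity
    by_cases hij : I i₀ = j
    · rw [if_pos hij]
      have h1 : u - α • gradF u (S (I i₀)) - (v - α • gradF v (S' (I i₀)))
          = (u - v) - (α • gradF u (S (I i₀)) - α • gradF v (S' (I i₀))) := by abel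
      rw [h1]
      have h2' : ‖α • gradF u (S (I i₀)) - α • gradF v (S' (I i₀))‖ ≤ α * L + α * L := by
        refine (norm_sub_le _ _).trans ?_
        rw [norm_smul, norm_smul, Real.norm_eq_abs, abs_of_pos hα]
        have := hgrad u (S (I i₀)); have := hgrad v (S' (I i₀))
        nlinarith
      have h3 := norm_sub_le (u - v) (α • gradF u (S (I i₀)) - α • gradF v (S' (I i₀)))
      nlinarith
    · rw [if_neg hij, ← hSS' (I i₀) hij]
      have h1 : u - α • gradF u (S (I i₀)) - (v - α • gradF v (S (I i₀)))
          = (u - v) - α • (gradF u (S (I i₀)) - gradF v (S (I i₀))) := by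
        rw [smul_sub]; abel
      rw [h1, add_zero]
      refine (norm_sub_le _ _).trans ?_
      rw [norm_smul, Real.norm_eq_abs, abs_of_pos hα]
      have := hsmooth (S (I i₀)) u v
      nlinarith
  -- counting
  have hcount : ∀ (p : Fin (T+1)),
      ∑ I : Fin (T+1) → Fin n, (if I p = j then (2*α*L:ℝ) else 0) = 2*α*L * (n:ℝ)^T := by
    intro p
    calc ∑ I : Fin (T+1) → Fin n, (if I p = j then (2*α*L:ℝ) else 0)
        = ∑ I : Fin (T+1) → Fin n, (2*α*L) * (if I p = j then (1:ℝ) else 0) := by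
          apply Finset.sum_congr rfl; intro I _; by_cases h : I p = j <;> simp [h]
      _ = 2*α*L * ∑ I : Fin (T+1) → Fin n, (if I p = j then (1:ℝ) else 0) := by
          rw [Finset.mul_sum]
      _ = 2*α*L * (n:ℝ)^T := by rw [count_fixed]; norm_num
  -- summed recursion
  have hrec : ∀ t, t + 1 ≤ T →
      ∑ I : Fin (T+1) → Fin n, ‖w I (t+1) - w' I (t+1)‖
        ≤ (n:ℝ)^T * (2*L/β) * ((1+α*β)^t - 1) := by
    intro t
    induction t with
    | zero => intro _; simp [hw1, hw1']
    | succ t ih =>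
      intro hle
      have h2 : 2 ≤ t + 2 := by omega
      have hT' : t + 2 ≤ T := hle
      calc ∑ I : Fin (T+1) → Fin n, ‖w I (t+2) - w' I (t+2)‖
          ≤ ∑ I : Fin (T+1) → Fin n, ((1+α*β) * ‖w I (t+1) - w' I (t+1)‖ +
              (if I ⟨t+2, by omega⟩ = j then 2*α*L else 0)) := by
            apply Finset.sum_le_sum
            intro I _
            simpa using hstep I (t+2) h2 hT'
        _ = (1+α*β) * ∑ I : Fin (T+1) → Fin n, ‖w I (t+1) - w' I (t+1)‖ + 2*α*L*(n:ℝ)^T := by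
            rw [Finset.sum_add_distrib, ← Finset.mul_sum, hcount]
        _ ≤ (1+α*β) * ((n:ℝ)^T * (2*L/β) * ((1+α*β)^t - 1)) + 2*α*L*(n:ℝ)^T := by
            have hnn : (0:ℝ) ≤ 1 + α*β := by positivity
            have := ih (by omega)
            nlinarith
        _ = (n:ℝ)^T * (2*L/β) * ((1+α*β)^(t+1) - 1) := by
            field_simp
            ring
  -- uniform bound
  have hEbound : ∀ τ, 1 ≤ τ → τ ≤ T →
      ∑ I : Fin (T+1) → Fin n, ‖w I τ - w' I τ‖ ≤ (n:ℝ)^T * (2*L/β) * Real.exp (c*β) := by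
    intro τ hτ1 hτ2
    obtain ⟨t, rfl⟩ : ∃ t, τ = t + 1 := ⟨τ - 1, by omega⟩
    refine (hrec t (by omega)).trans ?_
    have hαT : α * T ≤ c := (le_div_iff₀ hT0).mp hα2
    have hp : (1+α*β)^t ≤ Real.exp (c*β) := by
      have h1 : (1+α*β) ≤ Real.exp (α*β) := by
        have := Real.add_one_le_exp (α*β); linarith
      have h2 : (1+α*β)^t ≤ Real.exp (α*β) ^ t := by
        apply pow_le_pow_left₀ (by positivity) h1
      rw [← Real.exp_nat_mul] at h2
      refine h2.trans (Real.exp_le_exp.mpr ?_)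
      have htT : (t:ℝ) ≤ T := by exact_mod_cast (by omega : t ≤ T)
      nlinarith [mul_nonneg (mul_nonneg hα.le (sub_nonneg.mpr htT)) hβ.le,
        mul_nonneg (sub_nonneg.mpr hαT) hβ.le]
    have he : (0:ℝ) < Real.exp (c*β) := Real.exp_pos _
    have hA : (0:ℝ) ≤ (n:ℝ)^T * (2*L/β) := by positivity
    nlinarith
  -- supremum facts
  set sb := ⨆ i, s i with hsb
  have hsb_le : ∀ i, s i ≤ sb := fun i =>
    le_ciSup (Set.Finite.bddAbove (Set.finite_range s)) i
  have hsb0 : 0 ≤ sb := le_trans (hs ⟨0, hk⟩).1 (hsb_le ⟨0, hk⟩)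
  -- selection identity
  have hsel : ∀ i₀ : Fin k, ∑ m : Fin k → Bool,
      (∏ i, if m i then s i else 1 - s i) * (if m i₀ then (1:ℝ) else 0) = s i₀ := by
    intro i₀
    have key : ∀ m : Fin k → Bool,
        (∏ i, if m i then s i else 1 - s i) * (if m i₀ then (1:ℝ) else 0)
        = ∏ i, ((if m i then s i else 1 - s i) *
            (if i = i₀ then (if m i then (1:ℝ) else 0) else 1)) := by
      intro m
      rw [Finset.prod_mul_distrib]
      congr 1
      exact (Fintype.prod_ite_eq' i₀ (fun i => if m i then (1:ℝ) else 0)).symm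
    rw [Finset.sum_congr rfl fun m _ => key m,
      mask_sum_prod (fun i b => (if b then s i else 1 - s i) *
        (if i = i₀ then (if b then (1:ℝ) else 0) else 1))]
    have h2 : ∀ i : Fin k,
        ((if true then s i else 1 - s i) * (if i = i₀ then (if true then (1:ℝ) else 0) else 1) +
         (if false then s i else 1 - s i) * (if i = i₀ then (if false then (1:ℝ) else 0) else 1))
        = if i = i₀ then s i else 1 := by
      intro i; by_cases h : i = i₀ <;> simp [h]
    rw [Finset.prod_congr rfl fun i _ => h2 i, Fintype.prod_ite_eq']
  -- per-I mask bound
  have hperI : ∀ I : Fin (T+1) → Fin n,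
      (∑ m : Fin k → Bool, (∏ i, if m i then s i else 1 - s i) *
        |F (((1:ℝ)/k) • ∑ i : Fin k, (if m i then (1:ℝ) else 0) • w I (T-k+1+i)) z -
         F (((1:ℝ)/k) • ∑ i : Fin k, (if m i then (1:ℝ) else 0) • w' I (T-k+1+i)) z|)
      ≤ (L * sb / k) * ∑ i : Fin k, ‖w I (T-k+1+i) - w' I (T-k+1+i)‖ := by
    intro I
    have habs : ∀ m : Fin k → Bool,
        |F (((1:ℝ)/k) • ∑ i : Fin k, (if m i then (1:ℝ) else 0) • w I (T-k+1+i)) z -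
         F (((1:ℝ)/k) • ∑ i : Fin k, (if m i then (1:ℝ) else 0) • w' I (T-k+1+i)) z|
        ≤ (L/k) * ∑ i : Fin k, (if m i then (1:ℝ) else 0) * ‖w I (T-k+1+i) - w' I (T-k+1+i)‖ := by
      intro m
      refine (hLip z _ _).trans ?_
      have hdiffpt : ((1:ℝ)/k) • (∑ i : Fin k, (if m i then (1:ℝ) else 0) • w I (T-k+1+i)) -
          ((1:ℝ)/k) • (∑ i : Fin k, (if m i then (1:ℝ) else 0) • w' I (T-k+1+i))
          = ((1:ℝ)/k) • ∑ i : Fin k,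
              (if m i then (1:ℝ) else 0) • (w I (T-k+1+i) - w' I (T-k+1+i)) := by
        rw [← smul_sub, ← Finset.sum_sub_distrib]
        congr 1
        exact Finset.sum_congr rfl fun i _ => (smul_sub _ _ _).symm
      rw [hdiffpt, norm_smul, Real.norm_eq_abs, abs_of_nonneg (by positivity)]
      have hns : ‖∑ i : Fin k, (if m i then (1:ℝ) else 0) • (w I (T-k+1+i) - w' I (T-k+1+i))‖
          ≤ ∑ i : Fin k, (if m i then (1:ℝ) else 0) * ‖w I (T-k+1+i) - w' I (T-k+1+i)‖ := by
        refine (norm_sum_le _ _).trans ?_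
        apply Finset.sum_le_sum
        intro i _
        rw [norm_smul, Real.norm_eq_abs]
        by_cases h : m i <;> simp [h]
      calc L * ((1/k:ℝ) * ‖∑ i : Fin k, (if m i then (1:ℝ) else 0) •
            (w I (T-k+1+i) - w' I (T-k+1+i))‖)
          ≤ L * ((1/k:ℝ) * ∑ i : Fin k, (if m i then (1:ℝ) else 0) *
            ‖w I (T-k+1+i) - w' I (T-k+1+i)‖) := by
            apply mul_le_mul_of_nonneg_left _ hL.le
            apply mul_le_mul_of_nonneg_left hns (by positivity)
        _ = (L/k) * ∑ i : Fin k, (if m i then (1:ℝ) else 0) *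
            ‖w I (T-k+1+i) - w' I (T-k+1+i)‖ := by ring
    have hpm : ∀ m : Fin k → Bool, (0:ℝ) ≤ ∏ i, if m i then s i else 1 - s i := by
      intro m
      apply Finset.prod_nonneg
      intro i _
      by_cases h : m i <;> simp [h, (hs i).1]
      linarith [(hs i).2]
    calc ∑ m : Fin k → Bool, (∏ i, if m i then s i else 1 - s i) *
          |F (((1:ℝ)/k) • ∑ i : Fin k, (if m i then (1:ℝ) else 0) • w I (T-k+1+i)) z -
           F (((1:ℝ)/k) • ∑ i : Fin k, (if m i then (1:ℝ) else 0) • w' I (T-k+1+i)) z|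
        ≤ ∑ m : Fin k → Bool, (∏ i, if m i then s i else 1 - s i) *
            ((L/k) * ∑ i : Fin k, (if m i then (1:ℝ) else 0) *
              ‖w I (T-k+1+i) - w' I (T-k+1+i)‖) := by
          apply Finset.sum_le_sum
          intro m _
          exact mul_le_mul_of_nonneg_left (habs m) (hpm m)
      _ = ∑ m : Fin k → Bool, ∑ i : Fin k, ((∏ i', if m i' then s i' else 1 - s i') *
            (if m i then (1:ℝ) else 0)) * ((L/k) * ‖w I (T-k+1+i) - w' I (T-k+1+i)‖) := by
          apply Finset.sum_congr rfl
          intro m _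
          simp only [Finset.mul_sum]
          apply Finset.sum_congr rfl
          intro i _
          ring
      _ = ∑ i : Fin k, ∑ m : Fin k → Bool, ((∏ i', if m i' then s i' else 1 - s i') *
            (if m i then (1:ℝ) else 0)) * ((L/k) * ‖w I (T-k+1+i) - w' I (T-k+1+i)‖) :=
          Finset.sum_comm
      _ = ∑ i : Fin k, s i * ((L/k) * ‖w I (T-k+1+i) - w' I (T-k+1+i)‖) := by
          apply Finset.sum_congr rfl
          intro i _
          rw [← Finset.sum_mul, hsel i]
      _ ≤ ∑ i : Fin k, sb * ((L/k) * ‖w I (T-k+1+i) - w' I (T-k+1+i)‖) := by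
          apply Finset.sum_le_sum
          intro i _
          apply mul_le_mul_of_nonneg_right (hsb_le i) (by positivity)
      _ = (L * sb / k) * ∑ i : Fin k, ‖w I (T-k+1+i) - w' I (T-k+1+i)‖ := by
          rw [Finset.mul_sum]
          apply Finset.sum_congr rfl
          intro i _
          ring
  -- assemble
  have hmain : ((1 : ℝ) / (n : ℝ) ^ (T + 1)) *
      (∑ I : Fin (T + 1) → Fin n,
        ∑ m : Fin k → Bool,
          (∏ i, if m i then s i else 1 - s i) *
            |F (((1 : ℝ) / k) • ∑ i : Fin k, (if m i then (1 : ℝ) else 0) • w I (T - k + 1 + i)) z -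
              F (((1 : ℝ) / k) • ∑ i : Fin k, (if m i then (1 : ℝ) else 0) • w' I (T - k + 1 + i)) z|)
      ≤ 2 * sb * L^2 * Real.exp (c*β) / ((n:ℝ) * β) := by
    have h1 : (∑ I : Fin (T + 1) → Fin n,
        ∑ m : Fin k → Bool,
          (∏ i, if m i then s i else 1 - s i) *
            |F (((1 : ℝ) / k) • ∑ i : Fin k, (if m i then (1 : ℝ) else 0) • w I (T - k + 1 + i)) z -
              F (((1 : ℝ) / k) • ∑ i : Fin k, (if m i then (1 : ℝ) else 0) • w' I (T - k + 1 + i)) z|)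
        ≤ (L * sb / k) * ((k:ℝ) * ((n:ℝ)^T * (2*L/β) * Real.exp (c*β))) := by
      calc (∑ I : Fin (T + 1) → Fin n, ∑ m : Fin k → Bool,
            (∏ i, if m i then s i else 1 - s i) *
            |F (((1 : ℝ) / k) • ∑ i : Fin k, (if m i then (1 : ℝ) else 0) • w I (T - k + 1 + i)) z -
              F (((1 : ℝ) / k) • ∑ i : Fin k, (if m i then (1 : ℝ) else 0) • w' I (T - k + 1 + i)) z|)
          ≤ ∑ I : Fin (T + 1) → Fin n,
              (L * sb / k) * ∑ i : Fin k, ‖w I (T-k+1+i) - w' I (T-k+1+i)‖ :=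
            Finset.sum_le_sum fun I _ => hperI I
        _ = (L * sb / k) * ∑ i : Fin k, ∑ I : Fin (T + 1) → Fin n,
              ‖w I (T-k+1+i) - w' I (T-k+1+i)‖ := by
            rw [← Finset.mul_sum]
            congr 1
            exact Finset.sum_comm
        _ ≤ (L * sb / k) * ∑ i : Fin k, ((n:ℝ)^T * (2*L/β) * Real.exp (c*β)) := by
            apply mul_le_mul_of_nonneg_left _ (by positivity)
            apply Finset.sum_le_sum
            intro i _
            have hi := i.isLt
            exact hEbound (T-k+1+(i:ℕ)) (by omega) (by omega)
        _ = (L * sb / k) * ((k:ℝ) * ((n:ℝ)^T * (2*L/β) * Real.exp (c*β))) := by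
            rw [Finset.sum_const, Finset.card_univ, Fintype.card_fin, nsmul_eq_mul]
    have h2 : (0:ℝ) < (n:ℝ)^(T+1) := by positivity
    have h3 := mul_le_mul_of_nonneg_left h1 (le_of_lt (by positivity : (0:ℝ) < 1/(n:ℝ)^(T+1)))
    refine h3.trans (le_of_eq ?_)
    rw [pow_succ]
    field_simp
  refine hmain.trans ?_
  -- final numeric comparison
  have hP : (1:ℝ) ≤ ((T:ℝ)/(t₀:ℝ)) ^ (c*β/k) := by
    apply Real.one_le_rpow
    · rw [le_div_iff₀ (by exact_mod_cast (by omega : 0 < t₀))]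
      simpa using (by exact_mod_cast ht₀T : (t₀:ℝ) ≤ T)
    · positivity
  have he : (0:ℝ) < Real.exp (c*β) := Real.exp_pos _
  have hk1 : (1:ℝ) ≤ k := by exact_mod_cast hk
  have hn1 : (1:ℝ) ≤ (n:ℝ) - 1 := by
    have : (2:ℝ) ≤ n := by exact_mod_cast hn
    linarith
  have ht0n : (0:ℝ) ≤ (t₀:ℝ)/n := by positivity
  have key : 2 * sb * L^2 * Real.exp (c*β) / ((n:ℝ) * β)
      ≤ (2 * sb * L^2 * (1 + (k:ℝ) * Real.exp (c*β)) / (((n:ℝ) - 1) * β)) *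
          ((T:ℝ)/(t₀:ℝ)) ^ (c*β/k) := by
    have step1 : 2 * sb * L^2 * Real.exp (c*β) / ((n:ℝ) * β)
        ≤ 2 * sb * L^2 * (1 + (k:ℝ) * Real.exp (c*β)) / (((n:ℝ) - 1) * β) := by
      apply div_le_div₀ (by positivity)
      · have h' : Real.exp (c*β) ≤ 1 + (k:ℝ) * Real.exp (c*β) := by nlinarith
        nlinarith [mul_nonneg (mul_nonneg (by positivity : (0:ℝ) ≤ 2*sb) (sq_nonneg L))
          (sub_nonneg.mpr h')]
      · positivity
      · nlinarith [hβ.le]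
    refine step1.trans ?_
    exact le_mul_of_one_le_right (by positivity) hP
  linarith
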